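/- For every F-algebra automorphism f of A = M₃(F), the map f^•: J → J defined by f^•(a,b,c) := (f(a), f(b), f(c)) is an algebra automorphism of the Tits algebra J, and the assignment f ↦ f^• is an injective group homomorphism from the automorphism group of M₃(F) to the automorphism group of J. -/

import Mathlib

noncomputable section

open Matrix
open scoped BigOperators

variable (F : Type*) [Field F] [IsAlgClosed F] [CharZero F]

/-- `A = M₃(F)`. -/
abbrev MatF := Matrix (Fin 3) (Fin 3) F

/-- Second coefficient of the generic minimal polynomial: `Q(x) = ((Tr x)² − Tr(x²))/2`. -/
def qA (x : MatF F) : F := ((Matrix.trace x) ^ 2 - Matrix.trace (x * x)) / 2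

/-- The adjoint `x^♯ = x² − Tr(x)·x + Q(x)·1`. -/
def sharp (x : MatF F) : MatF F := x * x - Matrix.trace x • x + qA F x • (1 : MatF F)

/-- The cross product `x × y = (x+y)^♯ − x^♯ − y^♯`. -/
def crossA (x y : MatF F) : MatF F := sharp F (x + y) - sharp F x - sharp F y

/-- `x* = (1/2)Tr(x)·1 − (1/2)x`. -/
def starA (x : MatF F) : MatF F :=
  (1/2 : F) • (Matrix.trace x) • (1 : MatF F) - (1/2 : F) • x

/-- The Jordan product `x ∘ y = (xy + yx)/2`. -/
def circA (x y : MatF F) : MatF F := (1/2 : F) • (x * y + y * x)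

/-- The underlying space of the Tits construction of the Albert algebra: `A × A × A`. -/
abbrev TitsJ := MatF F × MatF F × MatF F

/-- The product of the Tits algebra `J`. -/
def tmul (u v : TitsJ F) : TitsJ F :=
  ( circA F u.1 v.1 + starA F (u.2.1 * v.2.2) + starA F (v.2.1 * u.2.2),
    starA F u.1 * v.2.1 + starA F v.1 * u.2.1 + (1/2 : F) • crossA F u.2.2 v.2.2,
    v.2.2 * starA F u.1 + u.2.2 * starA F v.1 + (1/2 : F) • crossA F u.2.1 v.2.1 )

/-- The extension `f^•(a,b,c) = (f a, f b, f c)` of an automorphism of `M₃(F)` to `J`,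
as a linear equivalence of `J`. -/
def fbullet (f : MatF F ≃ₐ[F] MatF F) : TitsJ F ≃ₗ[F] TitsJ F :=
  (f.toLinearEquiv).prodCongr ((f.toLinearEquiv).prodCongr (f.toLinearEquiv))

/-! An algebra endomorphism `f` of `Mₙ(R)` preserves the trace: `tr ∘ f` vanishes on commutators,
so it is a multiple of the trace, and the multiple is `1` because `f 1 = 1`. The operations
`Q`, `♯`, `×`, `*` and `∘` are built from the trace and the algebra operations, so `f` commutes
with all of them and `f^•` respects the Tits product. Composition is componentwise, and `f` is
read off from the first component of `f^•`. -/

namespace Matrix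

variable {R n : Type*} [CommRing R] [Fintype n] [DecidableEq n]

theorem apply_single_one_self_of_map_mul_comm (τ : Matrix n n R →ₗ[R] R)
    (hτ : ∀ a b, τ (a * b) = τ (b * a)) (i j : n) :
    τ (single i i 1) = τ (single j j 1) := by
  simpa using hτ (single i j 1) (single j i 1)

theorem apply_single_one_of_map_mul_comm_of_ne (τ : Matrix n n R →ₗ[R] R)
    (hτ : ∀ a b, τ (a * b) = τ (b * a)) {i j : n} (hij : i ≠ j) :
    τ (single i j 1) = 0 := by
  have hzero : single i j (1 : R) * single i i 1 = 0 :=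
    single_mul_single_of_ne _ _ _ _ hij.symm _
  simpa [hzero] using hτ (single i i 1) (single i j 1)

theorem apply_eq_mul_trace_of_map_mul_comm (τ : Matrix n n R →ₗ[R] R)
    (hτ : ∀ a b, τ (a * b) = τ (b * a)) (i : n) (x : Matrix n n R) :
    τ x = τ (single i i 1) * x.trace := by
  have hsingle : ∀ j k, single j k (x j k) = x j k • single j k (1 : R) := fun j k => by
    rw [smul_single, smul_eq_mul, mul_one]
  calc τ x = ∑ j, ∑ k, x j k * τ (single j k 1) := by
        conv_lhs => rw [matrix_eq_sum_single x]
        simp only [map_sum, hsingle, map_smul, smul_eq_mul]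
    _ = ∑ j, x j j * τ (single j j 1) := Finset.sum_congr rfl fun j _ =>
        Finset.sum_eq_single j
          (fun k _ hkj => by rw [apply_single_one_of_map_mul_comm_of_ne τ hτ hkj.symm, mul_zero])
          (by simp)
    _ = τ (single i i 1) * x.trace := by
        rw [trace, Finset.mul_sum]
        refine Finset.sum_congr rfl fun j _ => ?_
        rw [apply_single_one_self_of_map_mul_comm τ hτ j i, mul_comm, diag_apply]

theorem trace_algHom_apply [IsAddTorsionFree R] {G : Type*}
    [FunLike G (Matrix n n R) (Matrix n n R)] [AlgHomClass G R (Matrix n n R) (Matrix n n R)]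
    (f : G) (x : Matrix n n R) :
    (f x).trace = x.trace := by
  rcases isEmpty_or_nonempty n with _ | ⟨⟨i⟩⟩
  · simp [Subsingleton.elim x 0]
  let τ : Matrix n n R →ₗ[R] R := traceLinearMap n R R ∘ₗ (AlgHomClass.toAlgHom f).toLinearMap
  have hτ : ∀ a b, τ (a * b) = τ (b * a) := fun a b => by
    simp only [τ, LinearMap.comp_apply, AlgHom.toLinearMap_apply, map_mul, traceLinearMap_apply]
    exact trace_mul_comm _ _
  have hτ_single : τ (single i i 1) = 1 := by
    have hcard : Fintype.card n • τ (single i i 1) = Fintype.card n • 1 := by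
      simpa [τ, nsmul_eq_mul, mul_comm, eq_comm] using apply_eq_mul_trace_of_map_mul_comm τ hτ i 1
    exact nsmul_right_injective (Fintype.card_pos_iff.2 ⟨i⟩).ne' hcard
  simpa [τ, hτ_single] using apply_eq_mul_trace_of_map_mul_comm τ hτ i x

end Matrix

section TitsAutomorphism

variable {K : Type*} [Field K] (f : MatF K ≃ₐ[K] MatF K)

@[simp]
theorem fbullet_apply (u : TitsJ K) : fbullet K f u = (f u.1, f u.2.1, f u.2.2) := rfl

theorem map_circA (x y : MatF K) : f (circA K x y) = circA K (f x) (f y) := by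
  simp only [circA, map_smul, map_add, map_mul]

variable [CharZero K]

theorem map_qA (x : MatF K) : qA K (f x) = qA K x := by
  simp only [qA, ← map_mul, Matrix.trace_algHom_apply]

theorem map_sharp (x : MatF K) : f (sharp K x) = sharp K (f x) := by
  simp only [sharp, map_add, map_sub, map_mul, map_smul, map_one, map_qA,
    Matrix.trace_algHom_apply]

theorem map_crossA (x y : MatF K) : f (crossA K x y) = crossA K (f x) (f y) := by
  simp only [crossA, map_sub, map_sharp, map_add]

theorem map_starA (x : MatF K) : f (starA K x) = starA K (f x) := by
  simp only [starA, map_sub, map_smul, map_one, Matrix.trace_algHom_apply]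

theorem fbullet_tmul (u v : TitsJ K) :
    fbullet K f (tmul K u v) = tmul K (fbullet K f u) (fbullet K f v) := by
  simp only [fbullet_apply, tmul, map_add, map_mul, map_smul, map_circA, map_starA, map_crossA]

end TitsAutomorphism

/-- for every `F`-algebra automorphism `f` of `M₃(F)`, the map
`f^•(a,b,c) = (f a, f b, f c)` is an algebra automorphism of the Tits algebra `J`, and
`f ↦ f^•` is an injective group homomorphism from `Aut(M₃(F))` into `Aut(J)`. -/
theorem tits_fbullet_injective_hom :
    (∀ (f : MatF F ≃ₐ[F] MatF F) (x y : TitsJ F),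
        fbullet F f (tmul F x y) = tmul F (fbullet F f x) (fbullet F f y)) ∧
    (∀ f g : MatF F ≃ₐ[F] MatF F,
        fbullet F (f.trans g) = (fbullet F f).trans (fbullet F g)) ∧
    Function.Injective (fbullet F) := by
  refine ⟨fun f => fbullet_tmul f, fun _ _ => rfl, fun f g hfg => AlgEquiv.ext fun x => ?_⟩
  simpa using congr(($hfg (x, 0, 0)).1)

end
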